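/- arXiv:2104.05612 — 3 statements merged into one kernel-verified Lean document; each statement's English description precedes it below -/
import Mathlib

section
/- Let M = (M_1,…,M_n) be an n-outcome POVM on ℂ^d, let {X_γ}_{γ=1}^α be a partition of [n] = {1,…,n} into nonempty disjoint subsets, and for each γ set λ_γ = ‖Σ_{i∈X_γ} M_i‖^{-1} and q = (Σ_{γ=1}^α λ_γ^{-1})^{-1} = (Σ_{γ=1}^α ‖Σ_{i∈X_γ} M_i‖)^{-1}. Define, for each γ, the (n+1)-tuple N^γ by N^γ_i = λ_γ M_i for i ∈ X_γ, N^γ_i = 0 for i ∈ [n]\X_γ, and N^γ_{n+1} = 𝟙 − λ_γ Σ_{i∈X_γ} M_i. Then: (1) each N^γ is an (n+1)-outcome POVM; (2) the numbers q/λ_γ form a probability distribution over γ ∈ [α]; and (3) the convex combination L = Σ_{γ=1}^α (q/λ_γ) N^γ satisfies L_i = q·M_i for every i ∈ [n] and L_{n+1} = (1−q)·𝟙. -/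
open scoped BigOperators ComplexOrder

/-- The operator norm (ℓ²→ℓ² norm) of a complex matrix. -/
noncomputable def opNorm {m n : Type*} [Fintype m] [Fintype n] [DecidableEq n]
    (A : Matrix m n ℂ) : ℝ :=
  ‖LinearMap.toContinuousLinearMap (Matrix.toEuclideanLin A)‖

/-- An `n`-outcome POVM on ℂ^d: a tuple of positive semidefinite matrices summing to `1`. -/
def IsPOVM {d n : ℕ} (M : Fin n → Matrix (Fin d) (Fin d) ℂ) : Prop :=
  (∀ i, (M i).PosSemidef) ∧ ∑ i, M i = 1

section Aux
open Matrix

lemma opNorm_one_aux {d : ℕ} (hd : 0 < d) : opNorm (1 : Matrix (Fin d) (Fin d) ℂ) = 1 := by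
  haveI : Nontrivial (EuclideanSpace ℂ (Fin d)) :=
    Module.nontrivial_of_finrank_pos (R := ℂ) (by simp [hd])
  have h1 : LinearMap.toContinuousLinearMap (Matrix.toEuclideanLin (1 : Matrix (Fin d) (Fin d) ℂ))
      = ContinuousLinearMap.id ℂ (EuclideanSpace ℂ (Fin d)) := by
    ext x
    simp [Matrix.toEuclideanLin_apply]
  rw [opNorm, h1, ContinuousLinearMap.norm_id]

lemma opNorm_sum_le_aux {d α : ℕ} (f : Fin α → Matrix (Fin d) (Fin d) ℂ) :
    opNorm (∑ g, f g) ≤ ∑ g, opNorm (f g) := by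
  unfold opNorm
  rw [map_sum, map_sum]
  exact norm_sum_le _ _

lemma eq_zero_of_opNorm_aux {d : ℕ} (A : Matrix (Fin d) (Fin d) ℂ) (h : opNorm A = 0) :
    A = 0 := by
  rw [opNorm, norm_eq_zero] at h
  have h2 : Matrix.toEuclideanLin A = 0 := by
    have := congrArg (LinearMap.toContinuousLinearMap (𝕜 := ℂ)
      (E := EuclideanSpace ℂ (Fin d)) (F' := EuclideanSpace ℂ (Fin d))).symm h
    simpa using this
  exact Matrix.toEuclideanLin.injective (by simpa using h2)

lemma quad_eq_aux {d : ℕ} (A : Matrix (Fin d) (Fin d) ℂ) (x : Fin d → ℂ) :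
    star x ⬝ᵥ (A *ᵥ x) =
      inner ℂ ((WithLp.equiv 2 _).symm x)
        (Matrix.toEuclideanLin A ((WithLp.equiv 2 (Fin d → ℂ)).symm x)) := by
  rw [dotProduct_comm]; rfl

lemma quad_re_le_aux {d : ℕ} (A : Matrix (Fin d) (Fin d) ℂ) (x : Fin d → ℂ) :
    (star x ⬝ᵥ (A *ᵥ x)).re
      ≤ opNorm A * ‖(WithLp.equiv 2 (Fin d → ℂ)).symm x‖ ^ 2 := by
  set ex : EuclideanSpace ℂ (Fin d) := (WithLp.equiv 2 (Fin d → ℂ)).symm x with hex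
  rw [quad_eq_aux]
  have hle : ‖Matrix.toEuclideanLin A ex‖ ≤ opNorm A * ‖ex‖ :=
    (LinearMap.toContinuousLinearMap (Matrix.toEuclideanLin A)).le_opNorm ex
  calc (inner ℂ ex (Matrix.toEuclideanLin A ex) : ℂ).re
      ≤ ‖(inner ℂ ex (Matrix.toEuclideanLin A ex) : ℂ)‖ := Complex.re_le_norm _
    _ ≤ ‖ex‖ * ‖Matrix.toEuclideanLin A ex‖ := norm_inner_le_norm _ _
    _ ≤ ‖ex‖ * (opNorm A * ‖ex‖) := mul_le_mul_of_nonneg_left hle (norm_nonneg _)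
    _ = opNorm A * ‖ex‖ ^ 2 := by ring

lemma one_sub_smul_psd_aux {d : ℕ} {A : Matrix (Fin d) (Fin d) ℂ} (hA : A.PosSemidef)
    {c : ℝ} (hc0 : 0 ≤ c) (hc1 : c * opNorm A ≤ 1) :
    (1 - (c : ℂ) • A).PosSemidef := by
  refine Matrix.PosSemidef.of_dotProduct_mulVec_nonneg ?_ ?_
  · unfold Matrix.IsHermitian
    rw [Matrix.conjTranspose_sub, Matrix.conjTranspose_smul, Matrix.conjTranspose_one, hA.1]
    norm_num
  · intro x
    set ex : EuclideanSpace ℂ (Fin d) := (WithLp.equiv 2 (Fin d → ℂ)).symm x with hex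
    obtain ⟨r, hr0, hrle, hreq⟩ : ∃ r : ℝ, 0 ≤ r ∧ r ≤ opNorm A * ‖ex‖ ^ 2 ∧
        star x ⬝ᵥ (A *ᵥ x) = (r : ℂ) := by
      have hz := hA.dotProduct_mulVec_nonneg x
      rw [Complex.le_def] at hz
      refine ⟨(star x ⬝ᵥ (A *ᵥ x)).re, by simpa using hz.1, quad_re_le_aux A x, ?_⟩
      apply Complex.ext
      · simp
      · simpa using hz.2.symm
    have hxx : star x ⬝ᵥ ((1 : Matrix (Fin d) (Fin d) ℂ) *ᵥ x)
        = ((‖ex‖ : ℂ)) ^ 2 := by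
      rw [Matrix.one_mulVec, dotProduct_comm]
      exact inner_self_eq_norm_sq_to_K ex
    have key : star x ⬝ᵥ ((1 - (c : ℂ) • A) *ᵥ x)
        = ((‖ex‖ ^ 2 - c * r : ℝ) : ℂ) := by
      rw [Matrix.sub_mulVec, dotProduct_sub, hxx, Matrix.smul_mulVec,
        dotProduct_smul, smul_eq_mul, hreq]
      push_cast
      ring
    rw [key]
    have hN : 0 ≤ opNorm A := norm_nonneg _
    have hfin : (0:ℝ) ≤ ‖ex‖ ^ 2 - c * r := by nlinarith [sq_nonneg ‖ex‖]
    exact Complex.zero_le_real.mpr hfin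

lemma smul_psd_aux {d : ℕ} {A : Matrix (Fin d) (Fin d) ℂ} (hA : A.PosSemidef)
    {c : ℝ} (hc : 0 ≤ c) : ((c : ℂ) • A).PosSemidef := by
  refine Matrix.PosSemidef.of_dotProduct_mulVec_nonneg ?_ ?_
  · unfold Matrix.IsHermitian
    rw [Matrix.conjTranspose_smul, hA.1]
    norm_num
  · intro x
    rw [Matrix.smul_mulVec, dotProduct_smul, smul_eq_mul]
    exact mul_nonneg (Complex.zero_le_real.mpr hc) (hA.dotProduct_mulVec_nonneg x)

lemma dot_sum_aux {d n : ℕ} (s : Finset (Fin n)) (f : Fin n → Matrix (Fin d) (Fin d) ℂ)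
    (x : Fin d → ℂ) :
    star x ⬝ᵥ ((∑ j ∈ s, f j) *ᵥ x) = ∑ j ∈ s, star x ⬝ᵥ (f j *ᵥ x) := by
  induction s using Finset.cons_induction with
  | empty => simp
  | cons a s ha ih =>
      rw [Finset.sum_cons, Finset.sum_cons, Matrix.add_mulVec, dotProduct_add, ih]

lemma sum_psd_zero_aux {d n : ℕ} {s : Finset (Fin n)} {f : Fin n → Matrix (Fin d) (Fin d) ℂ}
    (hf : ∀ i, (f i).PosSemidef) (hsum : ∑ i ∈ s, f i = 0) : ∀ i ∈ s, f i = 0 := by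
  intro i hi
  have hquad : ∀ x : Fin d → ℂ, star x ⬝ᵥ (f i *ᵥ x) = 0 := by
    intro x
    have htot : ∑ j ∈ s, star x ⬝ᵥ (f j *ᵥ x) = 0 := by
      rw [← dot_sum_aux, hsum, Matrix.zero_mulVec, dotProduct_zero]
    exact (Finset.sum_eq_zero_iff_of_nonneg (fun j _ => (hf j).dotProduct_mulVec_nonneg x)).mp htot i hi
  have hmv : ∀ x, f i *ᵥ x = 0 := fun x => ((hf i).dotProduct_mulVec_zero_iff x).mp (hquad x)
  ext a b
  have := congrFun (hmv (Pi.single b 1)) a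
  simpa [Matrix.mulVec_single] using this

end Aux

/-- the basic simulation scheme of Theorem 1. -/
theorem statement0 {d n α : ℕ} (hd : 0 < d)
    (M : Fin n → Matrix (Fin d) (Fin d) ℂ) (hM : IsPOVM M)
    (X : Fin α → Finset (Fin n))
    (hne : ∀ g, (X g).Nonempty)
    (hdisj : ∀ g g', g ≠ g' → Disjoint (X g) (X g'))
    (hcover : ∀ i, ∃ g, i ∈ X g)
    (lam : Fin α → ℝ) (hlam : ∀ g, lam g = (opNorm (∑ i ∈ X g, M i))⁻¹)
    (q : ℝ) (hq : q = (∑ g, (lam g)⁻¹)⁻¹)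
    (N : Fin α → Fin (n + 1) → Matrix (Fin d) (Fin d) ℂ)
    (hN : ∀ g, N g = Fin.snoc (fun i => if i ∈ X g then (lam g : ℂ) • M i else 0)
        (1 - (lam g : ℂ) • ∑ i ∈ X g, M i)) :
    (∀ g, IsPOVM (N g)) ∧
    ((∀ g, 0 ≤ q / lam g) ∧ ∑ g, q / lam g = 1) ∧
    (∀ i : Fin n,
      ∑ g, ((q / lam g : ℝ) : ℂ) • N g (Fin.castSucc i) = (q : ℂ) • M i) ∧
    (∑ g, ((q / lam g : ℝ) : ℂ) • N g (Fin.last n) = ((1 - q : ℝ) : ℂ) • 1) := by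
  obtain ⟨hMpsd, hMsum⟩ := hM
  set S : Fin α → Matrix (Fin d) (Fin d) ℂ := fun g => ∑ i ∈ X g, M i with hSdef
  have hSpsd : ∀ g, (S g).PosSemidef := fun g =>
    Finset.sum_induction _ _ (fun a b ha hb => ha.add hb) Matrix.PosSemidef.zero
      (fun i _ => hMpsd i)
  have hpart : ∑ g, S g = 1 := by
    have huniv : Finset.univ.biUnion X = Finset.univ := by
      ext i; simpa using hcover i
    calc ∑ g, S g = ∑ i ∈ Finset.univ.biUnion X, M i :=
          (Finset.sum_biUnion (fun g _ g' _ h => hdisj g g' h)).symm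
      _ = 1 := by rw [huniv]; exact hMsum
  have hlam0 : ∀ g, 0 ≤ lam g := fun g => by
    rw [hlam]; exact inv_nonneg.mpr (norm_nonneg _)
  have hlammul : ∀ g, lam g * opNorm (S g) ≤ 1 := by
    intro g; rw [hlam]
    rcases eq_or_ne (opNorm (S g)) 0 with h | h
    · rw [show opNorm (∑ i ∈ X g, M i) = 0 from h]; simp
    · exact le_of_eq (inv_mul_cancel₀ h)
  have hSg0 : ∀ g, lam g = 0 → S g = 0 := by
    intro g hg
    rw [hlam] at hg
    exact eq_zero_of_opNorm_aux _ (inv_eq_zero.mp hg)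
  have hMzero : ∀ g, lam g = 0 → ∀ i ∈ X g, M i = 0 := fun g hg =>
    sum_psd_zero_aux hMpsd (hSg0 g hg)
  -- Part 1
  have hPOVM : ∀ g, IsPOVM (N g) := by
    intro g
    rw [hN g]
    constructor
    · intro j
      refine Fin.lastCases ?_ ?_ j
      · rw [Fin.snoc_last]
        exact one_sub_smul_psd_aux (hSpsd g) (hlam0 g) (hlammul g)
      · intro i
        rw [Fin.snoc_castSucc]
        by_cases hi : i ∈ X g
        · simpa [hi] using smul_psd_aux (hMpsd i) (hlam0 g)
        · simpa [hi] using Matrix.PosSemidef.zero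
    · rw [Fin.sum_univ_castSucc]
      simp only [Fin.snoc_castSucc, Fin.snoc_last]
      have hsum : (∑ i : Fin n, if i ∈ X g then (lam g : ℂ) • M i else 0)
          = (lam g : ℂ) • S g := by
        rw [Finset.sum_ite_mem, Finset.univ_inter, Finset.smul_sum]
      rw [hsum]
      abel
  -- Part 2
  have hsuminv : ∑ g, (lam g)⁻¹ = ∑ g, opNorm (S g) :=
    Finset.sum_congr rfl (fun g _ => by rw [hlam, inv_inv])
  have hone_le : (1 : ℝ) ≤ ∑ g, opNorm (S g) := by
    calc (1 : ℝ) = opNorm (1 : Matrix (Fin d) (Fin d) ℂ) := (opNorm_one_aux hd).symm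
      _ = opNorm (∑ g, S g) := by rw [hpart]
      _ ≤ ∑ g, opNorm (S g) := opNorm_sum_le_aux S
  have hpos : 0 < ∑ g, (lam g)⁻¹ := by rw [hsuminv]; linarith
  have hq0 : 0 < q := by rw [hq]; exact inv_pos.mpr hpos
  have prob2a : ∀ g, 0 ≤ q / lam g := fun g => div_nonneg hq0.le (hlam0 g)
  have prob2b : ∑ g, q / lam g = 1 := by
    simp_rw [div_eq_mul_inv, ← Finset.mul_sum, hq]
    exact inv_mul_cancel₀ hpos.ne'
  refine ⟨hPOVM, ⟨prob2a, prob2b⟩, ?_, ?_⟩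
  -- Part 3
  · intro i
    obtain ⟨g₀, hg₀⟩ := hcover i
    rw [Finset.sum_eq_single g₀]
    · rw [hN g₀]
      simp only [Fin.snoc_castSucc, hg₀, if_true]
      rw [smul_smul]
      rcases eq_or_ne (lam g₀) 0 with h | h
      · rw [hMzero g₀ h i hg₀]
        simp
      · have : ((q / lam g₀ : ℝ) : ℂ) * ((lam g₀ : ℝ) : ℂ) = (q : ℂ) := by
          rw [← Complex.ofReal_mul, div_mul_cancel₀ q h]
        rw [this]
    · intro g _ hgne
      have hnot : i ∉ X g := fun hmem => Finset.disjoint_left.mp (hdisj g g₀ hgne) hmem hg₀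
      rw [hN g]
      simp [Fin.snoc_castSucc, hnot]
    · intro h
      exact absurd (Finset.mem_univ g₀) h
  -- Part 4
  · have hterm : ∀ g, ((q / lam g : ℝ) : ℂ) • N g (Fin.last n)
        = ((q / lam g : ℝ) : ℂ) • (1 : Matrix (Fin d) (Fin d) ℂ) - (q : ℂ) • S g := by
      intro g
      rw [hN g, Fin.snoc_last, smul_sub, smul_smul]
      congr 1
      rcases eq_or_ne (lam g) 0 with h | h
      · have h0 : (∑ i ∈ X g, M i) = 0 := hSg0 g h
        simp [h0, hSg0 g h]
      · have : ((q / lam g : ℝ) : ℂ) * ((lam g : ℝ) : ℂ) = (q : ℂ) := by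
          rw [← Complex.ofReal_mul, div_mul_cancel₀ q h]
        rw [this]
    rw [Finset.sum_congr rfl (fun g _ => hterm g), Finset.sum_sub_distrib,
      ← Finset.sum_smul, ← Finset.smul_sum, hpart]
    have hsum1 : ∑ g, ((q / lam g : ℝ) : ℂ) = 1 := by
      rw [← Complex.ofReal_sum, prob2b, Complex.ofReal_one]
    rw [hsum1, one_smul]
    push_cast
    rw [sub_smul, one_smul]
end

section
/- For every integer n ≥ 2, ∫_0^1 |x − 1/n| · (n−1)·(1−x)^{n−2} dx = (2/n)·(1 − 1/n)^n. -/
open MeasureTheory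

lemma antider (c : ℝ) (m : ℕ) (x : ℝ) :
    HasDerivAt (fun y : ℝ => -((c - y) * (1 - y) ^ (m + 1)) + (1 - y) ^ (m + 2) / ((m : ℝ) + 2))
      ((c - x) * (((m : ℝ) + 1) * (1 - x) ^ m)) x := by
  have h1 : HasDerivAt (fun y : ℝ => 1 - y) (-1) x := by
    simpa using (hasDerivAt_id x).const_sub 1
  have h2 := h1.pow (m + 1)
  have h3 := h1.pow (m + 2)
  have h4 : HasDerivAt (fun y : ℝ => c - y) (-1) x := by
    simpa using (hasDerivAt_id x).const_sub c
  have h5 := ((h4.mul h2).neg).add (h3.div_const ((m : ℝ) + 2))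
  refine h5.congr_deriv ?_
  simp only [Nat.add_sub_cancel, Pi.pow_apply]
  have hm2 : ((m : ℝ) + 2) ≠ 0 := by positivity
  push_cast
  field_simp
  ring

/-- `∫_0^1 |x − 1/n| (n−1)(1−x)^{n−2} dx = (2/n)(1 − 1/n)^n`. -/
theorem statement17 (n : ℕ) (hn : 2 ≤ n) :
    ∫ x in Set.Icc (0 : ℝ) 1, |x - 1 / n| * (((n : ℝ) - 1) * (1 - x) ^ (n - 2)) =
      (2 / n) * (1 - 1 / n) ^ n := by
  obtain ⟨m, rfl⟩ : ∃ m, n = m + 2 := ⟨n - 2, by omega⟩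
  have hcast : ((m + 2 : ℕ) : ℝ) = (m : ℝ) + 2 := by push_cast; ring
  have hsimp : (m + 2) - 2 = m := by omega
  have hm2 : (0 : ℝ) < (m : ℝ) + 2 := by positivity
  set c : ℝ := 1 / ((m + 2 : ℕ) : ℝ) with hc
  have hcpos : 0 < c := by rw [hc, hcast]; positivity
  have hc1 : c ≤ 1 := by
    rw [hc, hcast, div_le_one hm2]
    linarith [Nat.cast_nonneg (α := ℝ) m]
  have hcont : Continuous fun x : ℝ => |x - c| * ((((m + 2 : ℕ) : ℝ) - 1) * (1 - x) ^ m) := by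
    fun_prop
  rw [MeasureTheory.integral_Icc_eq_integral_Ioc,
    ← intervalIntegral.integral_of_le (by norm_num : (0:ℝ) ≤ 1)]
  simp only [hsimp]
  have hint : ∀ a b : ℝ, IntervalIntegrable
      (fun x => |x - c| * ((((m + 2 : ℕ) : ℝ) - 1) * (1 - x) ^ m)) volume a b :=
    fun a b => hcont.intervalIntegrable a b
  have hsplit : (∫ x in (0:ℝ)..1, |x - c| * ((((m + 2 : ℕ) : ℝ) - 1) * (1 - x) ^ m))
      = (∫ x in (0:ℝ)..c, |x - c| * ((((m + 2 : ℕ) : ℝ) - 1) * (1 - x) ^ m))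
      + ∫ x in c..1, |x - c| * ((((m + 2 : ℕ) : ℝ) - 1) * (1 - x) ^ m) :=
    (intervalIntegral.integral_add_adjacent_intervals (hint 0 c) (hint c 1)).symm
  rw [hsplit]
  have key : ∀ a b : ℝ, ∫ x in a..b, (c - x) * (((m : ℝ) + 1) * (1 - x) ^ m)
      = (-((c - b) * (1 - b) ^ (m + 1)) + (1 - b) ^ (m + 2) / ((m : ℝ) + 2))
      - (-((c - a) * (1 - a) ^ (m + 1)) + (1 - a) ^ (m + 2) / ((m : ℝ) + 2)) := by
    intro a b
    apply intervalIntegral.integral_eq_sub_of_hasDerivAt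
    · intro x _
      exact antider c m x
    · apply Continuous.intervalIntegrable
      fun_prop
  have e1 : (∫ x in (0:ℝ)..c, |x - c| * ((((m + 2 : ℕ) : ℝ) - 1) * (1 - x) ^ m))
      = ∫ x in (0:ℝ)..c, (c - x) * (((m : ℝ) + 1) * (1 - x) ^ m) := by
    apply intervalIntegral.integral_congr
    intro x hx
    rw [Set.uIcc_of_le hcpos.le] at hx
    dsimp only
    rw [abs_of_nonpos (sub_nonpos.mpr hx.2), hcast]
    ring
  have e2 : (∫ x in c..1, |x - c| * ((((m + 2 : ℕ) : ℝ) - 1) * (1 - x) ^ m))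
      = ∫ x in c..1, -((c - x) * (((m : ℝ) + 1) * (1 - x) ^ m)) := by
    apply intervalIntegral.integral_congr
    intro x hx
    rw [Set.uIcc_of_le hc1] at hx
    dsimp only
    rw [abs_of_nonneg (sub_nonneg.mpr hx.1), hcast]
    ring
  rw [e1, e2, intervalIntegral.integral_neg, key, key, hc, hcast]
  have h1 : ((1:ℝ) - 1) = 0 := by norm_num
  rw [h1, zero_pow (by omega : m + 1 ≠ 0), zero_pow (by omega : m + 2 ≠ 0)]
  have hm2' : ((m : ℝ) + 2) ≠ 0 := ne_of_gt hm2
  field_simp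
  ring
end

section
/- Let n, α be positive integers, let γ : [n] → [α] be a map with fibers X_1,…,X_α, let (p_1,…,p_α) be a probability distribution with each p_γ > 0, let p = (p_1',…,p_n') be a probability vector on n outcomes, and let η ∈ [0,1], q ∈ (0,1], d_tot > 0. Define the subnormalized vector p̃ by p̃_i = η·q·p_i' + (1−η)·p_{γ(i)}/d_tot for i ∈ [n], and set ⟨X⟩ = Σ_{γ'=1}^α p_{γ'}·|X_{γ'}|. Then: (1) Σ_{i=1}^n p̃_i = η·q + (1−η)·⟨X⟩/d_tot; and (2) if moreover 2·⟨X⟩ = d_tot, then the postselected distribution p̂ with p̂_i = p̃_i / Σ_j p̃_j satisfies d_TV(p, p̂) ≤ (1/2)·(1−η)/(η·q + (1−η)/2) ≤ (1−η)·max{1/(2q), 1}. -/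
open scoped BigOperators

/-- Total variation distance between two vectors of outcome probabilities:
`(1/2) Σ_i |p_i − q_i|`. -/
noncomputable def dTV {n : ℕ} (p q : Fin n → ℝ) : ℝ :=
  (1 / 2) * ∑ i, |p i - q i|

/-- normalization and total-variation bound for the postselected noisy
distribution of the post-selection scheme. -/
theorem statement18 {n α : ℕ} (hn : 0 < n) (hα : 0 < α)
    (γ : Fin n → Fin α)
    (p : Fin α → ℝ) (hp : ∀ g, 0 < p g) (hpsum : ∑ g, p g = 1)
    (p' : Fin n → ℝ) (hp' : ∀ i, 0 ≤ p' i) (hp'sum : ∑ i, p' i = 1)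
    (η q dtot : ℝ) (hη : η ∈ Set.Icc (0 : ℝ) 1) (hq : q ∈ Set.Ioc (0 : ℝ) 1)
    (hdtot : 0 < dtot)
    (ptil : Fin n → ℝ)
    (hptil : ∀ i, ptil i = η * q * p' i + (1 - η) * p (γ i) / dtot)
    (Xavg : ℝ)
    (hX : Xavg = ∑ g, p g * ((Finset.univ.filter (fun i => γ i = g)).card : ℝ)) :
    (∑ i, ptil i = η * q + (1 - η) * Xavg / dtot) ∧
    (2 * Xavg = dtot →
      dTV p' (fun i => ptil i / ∑ j, ptil j) ≤
          (1 / 2) * (1 - η) / (η * q + (1 - η) / 2) ∧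
        (1 / 2) * (1 - η) / (η * q + (1 - η) / 2) ≤ (1 - η) * max (1 / (2 * q)) 1) := by
  obtain ⟨hη0, hη1⟩ := hη
  obtain ⟨hq0, hq1⟩ := hq
  have hfib : ∑ i, p (γ i) = Xavg := by
    rw [hX, ← Finset.sum_fiberwise Finset.univ γ (fun i => p (γ i))]
    refine Finset.sum_congr rfl (fun g _ => ?_)
    have hc : ∀ i ∈ Finset.univ.filter (fun i => γ i = g), p (γ i) = p g := fun i hi => by
      rw [(Finset.mem_filter.mp hi).2]
    rw [Finset.sum_congr rfl hc, Finset.sum_const, nsmul_eq_mul, mul_comm]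
  have hsum : ∑ i, ptil i = η * q + (1 - η) * Xavg / dtot := by
    simp only [hptil]
    rw [Finset.sum_add_distrib, ← Finset.mul_sum, hp'sum]
    rw [show ∀ x : Fin n → ℝ, (∑ i, (1 - η) * x i / dtot) = (1 - η) * (∑ i, x i) / dtot from
      fun x => by rw [Finset.mul_sum, Finset.sum_div], hfib]
    ring
  refine ⟨hsum, fun h2 => ?_⟩
  have hXd : Xavg / dtot = 1 / 2 := by
    field_simp; linarith
  have hS : ∑ i, ptil i = η * q + (1 - η) / 2 := by
    rw [hsum, mul_div_assoc, hXd]; ring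
  set S := η * q + (1 - η) / 2 with hSdef
  have hSpos : 0 < S := by
    rw [hSdef]
    rcases lt_or_eq_of_le hη1 with h | h
    · nlinarith
    · rw [← h]; nlinarith
  have hkey : dTV p' (fun i => ptil i / ∑ j, ptil j) ≤ (1 / 2) * (1 - η) / S := by
    unfold dTV
    rw [hS]
    have habs : ∀ i, |p' i - ptil i / S| = (1 - η) * |p' i / 2 - p (γ i) / dtot| / S := by
      intro i
      rw [hptil i]
      rw [show p' i - (η * q * p' i + (1 - η) * p (γ i) / dtot) / S
          = ((1 - η) * (p' i / 2 - p (γ i) / dtot)) / S by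
        field_simp; ring]
      rw [abs_div, abs_mul, abs_of_nonneg (by linarith : (0:ℝ) ≤ 1 - η),
        abs_of_pos hSpos, mul_div_assoc]
    calc (1/2) * ∑ i, |p' i - ptil i / S|
        = (1/2) * ∑ i, (1 - η) * |p' i / 2 - p (γ i) / dtot| / S := by
          simp only [habs]
      _ ≤ (1/2) * ∑ i, (1 - η) * (p' i / 2 + p (γ i) / dtot) / S := by
          refine mul_le_mul_of_nonneg_left (Finset.sum_le_sum fun i _ => ?_) (by norm_num)
          gcongr
          have := abs_sub (p' i / 2) (p (γ i) / dtot)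
          calc |p' i / 2 - p (γ i) / dtot| ≤ |p' i / 2| + |p (γ i) / dtot| := abs_sub _ _
            _ = p' i / 2 + p (γ i) / dtot := by
                rw [abs_of_nonneg (by linarith [hp' i]),
                  abs_of_nonneg (le_of_lt (div_pos (hp _) hdtot))]
      _ = (1/2) * (1 - η) / S := by
          have expand : ∀ i : Fin n, (1 - η) * (p' i / 2 + p (γ i) / dtot) / S
              = (1 - η) / (2 * S) * p' i + (1 - η) / (dtot * S) * p (γ i) := fun i => by
            field_simp
          rw [Finset.sum_congr rfl fun i _ => expand i, Finset.sum_add_distrib,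
            ← Finset.mul_sum, ← Finset.mul_sum, hp'sum, hfib]
          have hXv : Xavg = dtot / 2 := by linarith
          rw [hXv]
          field_simp
          ring
  refine ⟨hkey, ?_⟩
  have hSmin : min q (1/2) ≤ S := by
    rw [hSdef]
    rcases le_total q (1/2) with h | h
    · rw [min_eq_left h]; nlinarith
    · rw [min_eq_right h]; nlinarith
  have hminpos : 0 < min q (1/2) := lt_min hq0 (by norm_num)
  have : (1/2) / S ≤ (1/2) / min q (1/2) := by
    gcongr
  have heq : (1/2) / min q (1/2) = max (1 / (2*q)) 1 := by
    rcases le_total q (1/2) with h | h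
    · rw [min_eq_left h, max_eq_left]
      · rw [div_div]
      · rw [le_div_iff₀ (by linarith)]; linarith
    · rw [min_eq_right h, max_eq_right]
      · norm_num
      · rw [div_le_one (by linarith)]; linarith
  calc (1/2) * (1 - η) / S = (1 - η) * ((1/2) / S) := by ring
    _ ≤ (1 - η) * ((1/2) / min q (1/2)) := by
        apply mul_le_mul_of_nonneg_left this (by linarith)
    _ = (1 - η) * max (1 / (2*q)) 1 := by rw [heq]
end
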